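/- arXiv:math/0405137 — 5 statements merged into one kernel-verified Lean document; each statement's English description precedes it below -/
import Mathlib

section
/- Let p be a prime, m ≥ 0 and n ≥ 1 natural numbers, and write n = p^m·q + r with 0 ≤ r < p^m by Euclidean division. Then the p-adic valuations satisfy v_p(n!) = v_p(q!) + q·v_p((p^m)!) + v_p(r!); equivalently, n!/q! = ((p^m)!)^q · r! · u for some p-adic unit u. -/
/-!
By Legendre's formula `(p - 1) v_p(n!) = n - s_p(n)`, the identity is linear once the digit sums
are known. Since `r < p^m`, the base-`p` expansion of `p^m q + r` is that of `r`, padded with zeros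
to length `m`, followed by that of `q`; hence `s_p(p^m q + r) = s_p(q) + s_p(r)`, and in particular
`s_p(p^m) = 1`.
-/

open Nat

namespace Nat

theorem digits_sum_pow_mul_add {b m q r : ℕ} (hb : 1 < b) (hr : r < b ^ m) :
    (b.digits (b ^ m * q + r)).sum = (b.digits q).sum + (b.digits r).sum := by
  rcases eq_zero_or_pos q with rfl | hq
  · simp
  have hlen : (b.digits r).length ≤ m := (digits_length_le_iff hb r).2 hr
  have hexp := digits_append_zeroes_append_digits (k := m - (b.digits r).length) (n := r) hb hq
  rw [Nat.add_sub_cancel' hlen, add_comm] at hexp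
  rw [← hexp]
  simp [add_comm]

theorem digits_sum_base_pow {b : ℕ} (hb : 1 < b) (m : ℕ) : (b.digits (b ^ m)).sum = 1 := by
  simpa [digits_of_lt b 1 one_ne_zero hb] using
    digits_sum_pow_mul_add (q := 1) (r := 0) hb (pow_pos (by omega) m)

end Nat

namespace padicValNat

variable {p : ℕ} [hp : Fact p.Prime]

theorem sub_one_mul_factorial_add_digits_sum (n : ℕ) :
    (p - 1) * padicValNat p n ! + (p.digits n).sum = n := by
  rw [sub_one_mul_padicValNat_factorial, Nat.sub_add_cancel (digit_sum_le p n)]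

theorem factorial_pow_mul_add {m q r : ℕ} (hr : r < p ^ m) :
    padicValNat p (p ^ m * q + r)! =
      padicValNat p q ! + q * padicValNat p (p ^ m)! + padicValNat p r ! := by
  have hp1 := hp.out.one_lt
  have hn := sub_one_mul_factorial_add_digits_sum (p := p) (p ^ m * q + r)
  have hq := sub_one_mul_factorial_add_digits_sum (p := p) q
  have hr' := sub_one_mul_factorial_add_digits_sum (p := p) r
  have hpm := sub_one_mul_factorial_add_digits_sum (p := p) (p ^ m)
  rw [Nat.digits_sum_pow_mul_add hp1 hr] at hn
  rw [Nat.digits_sum_base_pow hp1] at hpm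
  apply Nat.eq_of_mul_eq_mul_left (show 0 < p - 1 by omega)
  nlinarith

end padicValNat

theorem exists_padicValRat_eq_zero_of_padicValNat_eq {p a b : ℕ} [Fact p.Prime] (ha : a ≠ 0)
    (hb : b ≠ 0) (h : padicValNat p a = padicValNat p b) :
    ∃ u : ℚ, u ≠ 0 ∧ padicValRat p u = 0 ∧ (a : ℚ) = b * u := by
  have ha' : (a : ℚ) ≠ 0 := by exact_mod_cast ha
  have hb' : (b : ℚ) ≠ 0 := by exact_mod_cast hb
  refine ⟨a / b, div_ne_zero ha' hb', ?_, (mul_div_cancel₀ _ hb').symm⟩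
  rw [padicValRat.div ha' hb', padicValRat.of_nat, padicValRat.of_nat, h, sub_self]

theorem stmt_12_general (p : ℕ) (hp : p.Prime) (m n q r : ℕ)
    (hdiv : n = p ^ m * q + r) (hr : r < p ^ m) :
    padicValNat p (n !) =
      padicValNat p (q !) + q * padicValNat p ((p ^ m)!) + padicValNat p (r !) ∧
    ∃ u : ℚ, u ≠ 0 ∧ padicValRat p u = 0 ∧
      (n ! : ℚ) = (q ! : ℚ) * ((p ^ m)! : ℚ) ^ q * (r ! : ℚ) * u := by
  have := Fact.mk hp
  subst hdiv
  have hval := padicValNat.factorial_pow_mul_add (q := q) hr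
  have hvd : padicValNat p (p ^ m * q + r)! = padicValNat p (q ! * ((p ^ m)!) ^ q * r !) := by
    rw [hval, padicValNat.mul (by positivity) (factorial_ne_zero r),
      padicValNat.mul (factorial_ne_zero q) (by positivity), padicValNat.pow]
  obtain ⟨u, hu0, hu, heq⟩ :=
    exists_padicValRat_eq_zero_of_padicValNat_eq (factorial_ne_zero _) (by positivity) hvd
  exact ⟨hval, u, hu0, hu, by rw [heq]; push_cast; rfl⟩

/-- Lemma 5.2.2: writing `n = p^m * q + r` with `0 ≤ r < p^m`, one has
`v_p(n!) = v_p(q!) + q • v_p((p^m)!) + v_p(r!)`; equivalently,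
`n! / q! = ((p^m)!)^q * r! * u` for a `p`-adic unit `u`. -/
theorem stmt_12 (p : ℕ) (hp : p.Prime) (m n q r : ℕ) (hn : 1 ≤ n)
    (hdiv : n = p ^ m * q + r) (hr : r < p ^ m) :
    padicValNat p (n !) =
      padicValNat p (q !) + q * padicValNat p ((p ^ m)!) + padicValNat p (r !) ∧
    ∃ u : ℚ, u ≠ 0 ∧ padicValRat p u = 0 ∧
      (n ! : ℚ) = (q ! : ℚ) * ((p ^ m)! : ℚ) ^ q * (r ! : ℚ) * u :=
  stmt_12_general p hp m n q r hdiv hr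
end

section
/- Let A be a p-torsion free, p-adically separated ℤ_p-algebra with p-adic completion Â, and let B be a subring of ℚ_p ⊗_{ℤ_p} A containing A. Then: (i) the sum B + Â (taken inside ℚ_p ⊗_{ℤ_p} Â) is a subring of ℚ_p ⊗_{ℤ_p} Â, equal to the image of the multiplication map Â ⊗_A B → ℚ_p ⊗_{ℤ_p} Â; and (ii) the inclusion B → B + Â induces an isomorphism on p-adic completions. -/
open scoped TensorProduct

/-- `ι : A → Â` exhibits `Â` as the `p`-adic completion of `A`: `Â` is `p`-adically
separated and complete, the image of `A` is `p`-adically dense, and `ι` induces injections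
`A/pⁿA → Â/pⁿÂ` for every `n` (so that `A/pⁿA ≅ Â/pⁿÂ`). -/
def IsPAdicCompletionHom (p : ℕ) {A Ahat : Type*} [Ring A] [Ring Ahat]
    (ι : A →+* Ahat) : Prop :=
  (∀ x : Ahat, (∀ n : ℕ, ∃ y : Ahat, x = (p : Ahat) ^ n * y) → x = 0) ∧
  (∀ x : ℕ → Ahat, (∀ n : ℕ, ∃ y : Ahat, x (n + 1) - x n = (p : Ahat) ^ n * y) →
    ∃ z : Ahat, ∀ n : ℕ, ∃ y : Ahat, z - x n = (p : Ahat) ^ n * y) ∧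
  (∀ (n : ℕ) (z : Ahat), ∃ (a : A) (y : Ahat), z - ι a = (p : Ahat) ^ n * y) ∧
  (∀ (n : ℕ) (a : A), (∃ y : Ahat, ι a = (p : Ahat) ^ n * y) →
    ∃ b : A, a = (p : A) ^ n * b)

/-!
Every element of `ℚ_p ⊗ A` lands in `A` after multiplication by some `pᵏ`, while density
gives `Â = pᵏÂ + A`. So for `b ∈ B` with `pᵏb = a₀ ∈ A` and `ŷ = pᵏẑ + a`,
`ŷ·b = ẑ·a₀ + a·b ∈ Â + B`, which makes `B + Â` a ring and the image of `Â ⊗_A B`.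
Modulo `pⁿ`, density again shows that `B → (B + Â)/pⁿ` is onto; conversely, if
`b ∈ pⁿ(B + Â)`, clearing denominators reduces to `A ∩ pᵐÂ = pᵐA`, one of the defining
properties of the completion, once `Â` is known to be `p`-torsion free (so `Â ↪ ℚ_p ⊗ Â`).
-/

namespace PadicInt
variable {p : ℕ} [Fact p.Prime]

instance isLocalization_away_p : IsLocalization.Away (p : ℤ_[p]) ℚ_[p] where
  map_units := by
    rintro ⟨_, k, rfl⟩
    simp [(Fact.out : p.Prime).ne_zero]
  surj q := by
    have hp1 : (1 : ℝ) < p := mod_cast (Fact.out : p.Prime).one_lt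
    obtain ⟨k, hk⟩ := pow_unbounded_of_one_lt ‖q‖ hp1
    have hnorm : ‖q * (p : ℚ_[p]) ^ k‖ ≤ 1 := by
      rw [norm_mul, norm_pow, Padic.norm_p, inv_pow, mul_inv_le_iff₀ (by positivity), one_mul]
      exact hk.le
    exact ⟨(⟨_, hnorm⟩, ⟨_, k, rfl⟩), rfl⟩
  exists_of_eq h := ⟨1, by rw [IsFractionRing.injective ℤ_[p] ℚ_[p] h]⟩

end PadicInt

section BaseChange
variable {p : ℕ} [Fact p.Prime] {C : Type*} [Ring C] [Algebra ℤ_[p] C]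
open Algebra.TensorProduct

/- With the instance above, `IsLocalization.tensorProduct_isLocalizedModule` makes
`c ↦ 1 ⊗ c` the localization of `C` at the powers of `p`. -/

theorem exists_natCast_pow_mul_eq_includeRight (x : ℚ_[p] ⊗[ℤ_[p]] C) :
    ∃ (k : ℕ) (c : C), (p : ℚ_[p] ⊗[ℤ_[p]] C) ^ k * x = includeRight c := by
  obtain ⟨⟨c, _, k, rfl⟩, h⟩ :=
    IsLocalizedModule.surj (Submonoid.powers (p : ℤ_[p])) (TensorProduct.mk ℤ_[p] ℚ_[p] C 1) x
  refine ⟨k, c, ?_⟩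
  rw [← map_natCast (algebraMap ℤ_[p] _), ← map_pow, ← Algebra.smul_def]
  exact h

theorem includeRight_injective_of_natCast_mul (htf : ∀ c : C, (p : C) * c = 0 → c = 0) :
    Function.Injective (includeRight : C →ₐ[ℤ_[p]] ℚ_[p] ⊗[ℤ_[p]] C) := by
  have hreg : IsSMulRegular C (p : ℤ_[p]) := by
    intro a b h
    rw [← sub_eq_zero]
    apply htf
    simpa only [Algebra.smul_def, map_natCast, mul_sub, sub_eq_zero] using h
  rw [injective_iff_map_eq_zero]
  intro c hc
  obtain ⟨⟨_, k, rfl⟩, hk⟩ :=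
    (IsLocalizedModule.eq_zero_iff (Submonoid.powers (p : ℤ_[p]))
      (TensorProduct.mk ℤ_[p] ℚ_[p] C 1)).mp hc
  exact (hreg.pow k) (hk.trans (smul_zero _).symm)

theorem isUnit_natCast_pow (k : ℕ) : IsUnit ((p : ℚ_[p] ⊗[ℤ_[p]] C) ^ k) := by
  have hp : (p : ℚ_[p]) ≠ 0 := Nat.cast_ne_zero.mpr (Fact.out : p.Prime).ne_zero
  rw [← map_natCast (algebraMap ℚ_[p] (ℚ_[p] ⊗[ℤ_[p]] C)), ← map_pow]
  exact ((isUnit_iff_ne_zero.mpr hp).pow k).map _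

end BaseChange

namespace IsPAdicCompletionHom
variable {p : ℕ} {A Ahat : Type*} [Ring A] [Ring Ahat] {ι : A →+* Ahat}

theorem exists_eq_pow_mul_add (hι : IsPAdicCompletionHom p ι) (n : ℕ) (y : Ahat) :
    ∃ (a : A) (z : Ahat), y = (p : Ahat) ^ n * z + ι a := by
  obtain ⟨a, z, h⟩ := hι.2.2.1 n y
  exact ⟨a, z, by rw [← h, sub_add_cancel]⟩

/-- Writing `y = pⁿz + ι a`, `p * y = 0` gives `ι (p a) ∈ pⁿ⁺¹Â`, hence `a ∈ pⁿA`
and `y ∈ pⁿÂ` for every `n`. -/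
theorem natCast_mul_eq_zero (hι : IsPAdicCompletionHom p ι)
    (htf : ∀ a : A, (p : A) * a = 0 → a = 0) (y : Ahat) (hy : (p : Ahat) * y = 0) : y = 0 := by
  refine hι.1 y fun n => ?_
  obtain ⟨a, z, rfl⟩ := hι.exists_eq_pow_mul_add n y
  have hpa : ι ((p : A) * a) = (p : Ahat) ^ (n + 1) * -z := by
    rw [map_mul, map_natCast, pow_succ', mul_assoc, mul_neg, ← sub_eq_zero, ← mul_sub,
      sub_neg_eq_add, add_comm, hy]
  obtain ⟨a', ha'⟩ := hι.2.2.2 (n + 1) _ ⟨-z, hpa⟩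
  have ha : a = (p : A) ^ n * a' := by
    rw [← sub_eq_zero]
    apply htf
    rw [mul_sub, ← mul_assoc, ← pow_succ', ← ha', sub_self]
  exact ⟨z + ι a', by rw [ha, map_mul, map_pow, map_natCast, mul_add]⟩

end IsPAdicCompletionHom

section SumWithCompletion
open Algebra.TensorProduct

variable {p : ℕ} [Fact p.Prime] {A Ahat : Type*} [Ring A] [Algebra ℤ_[p] A] [Ring Ahat]
  [Algebra ℤ_[p] Ahat] (ι : A →ₐ[ℤ_[p]] Ahat) (B : Subring (ℚ_[p] ⊗[ℤ_[p]] A))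

local notation "Φ" => Algebra.TensorProduct.map (AlgHom.id ℤ_[p] ℚ_[p]) ι

/-- `B + Â` inside `ℚ_p ⊗ Â`. -/
def sumWithCompletion : Set (ℚ_[p] ⊗[ℤ_[p]] Ahat) :=
  {x | ∃ b ∈ B, ∃ y : Ahat, x = Φ b + includeRight y}

variable {ι B}

theorem map_add_includeRight_mem {b : ℚ_[p] ⊗[ℤ_[p]] A} (hb : b ∈ B) (y : Ahat) :
    Φ b + includeRight y ∈ sumWithCompletion ι B :=
  ⟨b, hb, y, rfl⟩

theorem includeRight_mem_sumWithCompletion (y : Ahat) :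
    includeRight y ∈ sumWithCompletion ι B :=
  ⟨0, B.zero_mem, y, by rw [map_zero, zero_add]⟩

theorem add_mem_sumWithCompletion {x x' : ℚ_[p] ⊗[ℤ_[p]] Ahat}
    (hx : x ∈ sumWithCompletion ι B) (hx' : x' ∈ sumWithCompletion ι B) :
    x + x' ∈ sumWithCompletion ι B := by
  obtain ⟨b, hb, y, rfl⟩ := hx
  obtain ⟨b', hb', y', rfl⟩ := hx'
  refine ⟨b + b', B.add_mem hb hb', y + y', ?_⟩
  rw [map_add, map_add]
  abel

theorem map_id_includeRight (a : A) : Φ (includeRight a) = includeRight (ι a) := by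
  simp

theorem exists_natCast_pow_mul_map_eq (b : ℚ_[p] ⊗[ℤ_[p]] A) :
    ∃ (k : ℕ) (a : A), (p : ℚ_[p] ⊗[ℤ_[p]] Ahat) ^ k * Φ b = includeRight (ι a) := by
  obtain ⟨k, a, h⟩ := exists_natCast_pow_mul_eq_includeRight b
  refine ⟨k, a, ?_⟩
  rw [← map_id_includeRight, ← h, map_mul, map_pow, map_natCast]

theorem includeRight_mul_map_mem (hι : IsPAdicCompletionHom p ι.toRingHom)
    (hAB : ∀ a : A, includeRight a ∈ B) {b : ℚ_[p] ⊗[ℤ_[p]] A} (hb : b ∈ B) (y : Ahat) :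
    includeRight y * Φ b ∈ sumWithCompletion ι B := by
  obtain ⟨k, a, ha⟩ := exists_natCast_pow_mul_map_eq (ι := ι) b
  obtain ⟨c, z, rfl⟩ := hι.exists_eq_pow_mul_add k y
  have key : includeRight ((p : Ahat) ^ k * z + ι c) * Φ b =
      Φ (includeRight c * b) + includeRight (z * ι a) := by
    rw [map_add, add_mul, map_mul, map_mul, map_id_includeRight, add_comm, map_mul, map_pow,
      map_natCast, ((Nat.cast_commute p _).pow_left k).eq, mul_assoc, ha, ← map_mul]
  rw [AlgHom.toRingHom_eq_coe, RingHom.coe_coe, key]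
  exact map_add_includeRight_mem (B.mul_mem (hAB c) hb) _

theorem map_mul_includeRight_mem (hι : IsPAdicCompletionHom p ι.toRingHom)
    (hAB : ∀ a : A, includeRight a ∈ B) {b : ℚ_[p] ⊗[ℤ_[p]] A} (hb : b ∈ B) (y : Ahat) :
    Φ b * includeRight y ∈ sumWithCompletion ι B := by
  obtain ⟨k, a, ha⟩ := exists_natCast_pow_mul_map_eq (ι := ι) b
  obtain ⟨c, z, rfl⟩ := hι.exists_eq_pow_mul_add k y
  have key : Φ b * includeRight ((p : Ahat) ^ k * z + ι c) =
      Φ (b * includeRight c) + includeRight (ι a * z) := by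
    rw [map_add, mul_add, map_mul, map_mul, map_id_includeRight, add_comm, map_mul, map_pow,
      map_natCast, ← mul_assoc, ← ((Nat.cast_commute p _).pow_left k).eq, ha, ← map_mul]
  rw [AlgHom.toRingHom_eq_coe, RingHom.coe_coe, key]
  exact map_add_includeRight_mem (B.mul_mem hb (hAB c)) _

def sumWithCompletionSubring (hι : IsPAdicCompletionHom p ι.toRingHom)
    (hAB : ∀ a : A, includeRight a ∈ B) : Subring (ℚ_[p] ⊗[ℤ_[p]] Ahat) where
  carrier := sumWithCompletion ι B
  zero_mem' := ⟨0, B.zero_mem, 0, by rw [map_zero, map_zero, add_zero]⟩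
  one_mem' := ⟨1, B.one_mem, 0, by rw [map_one, map_zero, add_zero]⟩
  add_mem' := add_mem_sumWithCompletion
  neg_mem' := by
    rintro _ ⟨b, hb, y, rfl⟩
    exact ⟨-b, B.neg_mem hb, -y, by rw [map_neg, map_neg, neg_add]⟩
  mul_mem' := by
    rintro _ _ ⟨b, hb, y, rfl⟩ ⟨b', hb', y', rfl⟩
    have expand : (Φ b + includeRight y) * (Φ b' + includeRight y') =
        (Φ (b * b') + includeRight (y * y')) +
          (Φ b * includeRight y' + includeRight y * Φ b') := by
      rw [map_mul, map_mul]
      noncomm_ring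
    rw [expand]
    exact add_mem_sumWithCompletion (map_add_includeRight_mem (B.mul_mem hb hb') _)
      (add_mem_sumWithCompletion (map_mul_includeRight_mem hι hAB hb y')
        (includeRight_mul_map_mem hι hAB hb' y))

theorem sumWithCompletion_eq_closure (hι : IsPAdicCompletionHom p ι.toRingHom)
    (hAB : ∀ a : A, includeRight a ∈ B) :
    sumWithCompletion ι B = (AddSubgroup.closure {z : ℚ_[p] ⊗[ℤ_[p]] Ahat |
      ∃ (y : Ahat) (b : ℚ_[p] ⊗[ℤ_[p]] A), b ∈ B ∧ z = includeRight y * Φ b} :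
        AddSubgroup (ℚ_[p] ⊗[ℤ_[p]] Ahat)) := by
  apply le_antisymm
  · rintro _ ⟨b, hb, y, rfl⟩
    exact add_mem (AddSubgroup.subset_closure ⟨1, b, hb, by rw [map_one, one_mul]⟩)
      (AddSubgroup.subset_closure ⟨y, 1, B.one_mem, by rw [map_one, mul_one]⟩)
  · refine (AddSubgroup.closure_le (sumWithCompletionSubring hι hAB).toAddSubgroup).mpr ?_
    rintro _ ⟨y, b, hb, rfl⟩
    exact includeRight_mul_map_mem hι hAB hb y

theorem exists_sub_map_eq_pow_mul (hι : IsPAdicCompletionHom p ι.toRingHom)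
    (hAB : ∀ a : A, includeRight a ∈ B) (n : ℕ) {x : ℚ_[p] ⊗[ℤ_[p]] Ahat}
    (hx : x ∈ sumWithCompletion ι B) :
    ∃ b ∈ B, ∃ t ∈ sumWithCompletion ι B,
      x - Φ b = (p : ℚ_[p] ⊗[ℤ_[p]] Ahat) ^ n * t := by
  obtain ⟨b, hb, y, rfl⟩ := hx
  obtain ⟨c, z, rfl⟩ := hι.exists_eq_pow_mul_add n y
  refine ⟨b + includeRight c, B.add_mem hb (hAB c), includeRight z,
    includeRight_mem_sumWithCompletion z, ?_⟩
  simp only [AlgHom.toRingHom_eq_coe, RingHom.coe_coe, map_add, map_mul, map_pow, map_natCast,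
    map_id_includeRight]
  abel

theorem exists_eq_pow_mul_includeRight_of_map_eq (hι : IsPAdicCompletionHom p ι.toRingHom)
    (htf : ∀ a : A, (p : A) * a = 0 → a = 0) {n : ℕ} {d : ℚ_[p] ⊗[ℤ_[p]] A} {y : Ahat}
    (hd : Φ d = (p : ℚ_[p] ⊗[ℤ_[p]] Ahat) ^ n * includeRight y) :
    ∃ a : A, d = (p : ℚ_[p] ⊗[ℤ_[p]] A) ^ n * includeRight a := by
  obtain ⟨k, a, hka⟩ := exists_natCast_pow_mul_eq_includeRight d
  have hιa : ι a = (p : Ahat) ^ (k + n) * y := by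
    apply includeRight_injective_of_natCast_mul (hι.natCast_mul_eq_zero htf)
    rw [← map_id_includeRight, ← hka, map_mul, map_pow, map_natCast, hd, map_mul, map_pow,
      map_natCast, ← mul_assoc, ← pow_add]
  obtain ⟨a', rfl⟩ := hι.2.2.2 (k + n) a ⟨y, hιa⟩
  refine ⟨a', (isUnit_natCast_pow k).mul_right_inj.mp ?_⟩
  rw [hka, map_mul, map_pow, map_natCast, pow_add, mul_assoc]

theorem exists_eq_pow_mul_of_map_eq_pow_mul (hι : IsPAdicCompletionHom p ι.toRingHom)
    (htf : ∀ a : A, (p : A) * a = 0 → a = 0) (hAB : ∀ a : A, includeRight a ∈ B) {n : ℕ}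
    {b : ℚ_[p] ⊗[ℤ_[p]] A} {t : ℚ_[p] ⊗[ℤ_[p]] Ahat}
    (ht : t ∈ sumWithCompletion ι B) (hbt : Φ b = (p : ℚ_[p] ⊗[ℤ_[p]] Ahat) ^ n * t) :
    ∃ b' ∈ B, b = (p : ℚ_[p] ⊗[ℤ_[p]] A) ^ n * b' := by
  obtain ⟨b₀, hb₀, y, rfl⟩ := ht
  obtain ⟨a, ha⟩ := exists_eq_pow_mul_includeRight_of_map_eq (d := b - p ^ n * b₀) hι htf (by
    rw [map_sub, map_mul, map_pow, map_natCast, hbt, mul_add, add_sub_cancel_left])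
  refine ⟨includeRight a + b₀, B.add_mem (hAB a) hb₀, ?_⟩
  rw [mul_add, ← ha, sub_add_cancel]

end SumWithCompletion

theorem stmt_15_general (p : ℕ) [hp : Fact p.Prime]
    (A : Type*) [Ring A] [Algebra ℤ_[p] A]
    (Ahat : Type*) [Ring Ahat] [Algebra ℤ_[p] Ahat]
    (ι : A →ₐ[ℤ_[p]] Ahat) (hι : IsPAdicCompletionHom p ι.toRingHom)
    (htf : ∀ a : A, (p : A) * a = 0 → a = 0)
    (B : Subring (ℚ_[p] ⊗[ℤ_[p]] A))
    (hAB : ∀ a : A,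
      ((Algebra.TensorProduct.includeRight : A →ₐ[ℤ_[p]] ℚ_[p] ⊗[ℤ_[p]] A) a) ∈ B) :
    let Φ : ℚ_[p] ⊗[ℤ_[p]] A →ₐ[ℤ_[p]] ℚ_[p] ⊗[ℤ_[p]] Ahat :=
      Algebra.TensorProduct.map (AlgHom.id ℤ_[p] ℚ_[p]) ι
    let ir : Ahat →ₐ[ℤ_[p]] ℚ_[p] ⊗[ℤ_[p]] Ahat := Algebra.TensorProduct.includeRight
    let T : Set (ℚ_[p] ⊗[ℤ_[p]] Ahat) := {x | ∃ b ∈ B, ∃ y : Ahat, x = Φ b + ir y}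
    ((∃ S : Subring (ℚ_[p] ⊗[ℤ_[p]] Ahat), (S : Set (ℚ_[p] ⊗[ℤ_[p]] Ahat)) = T) ∧
      T = (AddSubgroup.closure {z : ℚ_[p] ⊗[ℤ_[p]] Ahat |
            ∃ (y : Ahat) (b : ℚ_[p] ⊗[ℤ_[p]] A), b ∈ B ∧ z = ir y * Φ b} :
          AddSubgroup (ℚ_[p] ⊗[ℤ_[p]] Ahat))) ∧
    ∀ n : ℕ,
      (∀ x ∈ T, ∃ b ∈ B, ∃ t ∈ T,
        x - Φ b = (p : ℚ_[p] ⊗[ℤ_[p]] Ahat) ^ n * t) ∧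
      (∀ b ∈ B, (∃ t ∈ T, Φ b = (p : ℚ_[p] ⊗[ℤ_[p]] Ahat) ^ n * t) →
        ∃ b' ∈ B, b = (p : ℚ_[p] ⊗[ℤ_[p]] A) ^ n * b') := by
  intro Φ ir T
  exact ⟨⟨⟨sumWithCompletionSubring hι hAB, rfl⟩, sumWithCompletion_eq_closure hι hAB⟩,
    fun n => ⟨fun _ hx => exists_sub_map_eq_pow_mul hι hAB n hx,
      fun _ _ ⟨_, ht, hbt⟩ => exists_eq_pow_mul_of_map_eq_pow_mul hι htf hAB ht hbt⟩⟩

/-- Corollary 5.3.6 and Lemma 5.3.8: let `A` be a `p`-torsion free, `p`-adically separated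
(not necessarily commutative) `ℤ_[p]`-algebra with `p`-adic completion `Â`, and let `B` be a
subring of `ℚ_[p] ⊗[ℤ_[p]] A` containing `A`.  Then, inside `ℚ_[p] ⊗[ℤ_[p]] Â`:
(i) the sum `B + Â` is a subring, equal to the image of the multiplication map
`Â ⊗_A B → ℚ_[p] ⊗[ℤ_[p]] Â` (i.e. the additive subgroup generated by products `ŷ·b`), and
(ii) the inclusion `B → B + Â` induces an isomorphism on `p`-adic completions (it is
bijective modulo `pⁿ` for every `n`). -/
theorem stmt_15 (p : ℕ) [hp : Fact p.Prime]
    (A : Type*) [Ring A] [Algebra ℤ_[p] A]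
    (Ahat : Type*) [Ring Ahat] [Algebra ℤ_[p] Ahat]
    (ι : A →ₐ[ℤ_[p]] Ahat) (hι : IsPAdicCompletionHom p ι.toRingHom)
    (htf : ∀ a : A, (p : A) * a = 0 → a = 0)
    (hsep : ∀ a : A, (∀ n : ℕ, ∃ b : A, a = (p : A) ^ n * b) → a = 0)
    (B : Subring (ℚ_[p] ⊗[ℤ_[p]] A))
    (hAB : ∀ a : A,
      ((Algebra.TensorProduct.includeRight : A →ₐ[ℤ_[p]] ℚ_[p] ⊗[ℤ_[p]] A) a) ∈ B) :
    let Φ : ℚ_[p] ⊗[ℤ_[p]] A →ₐ[ℤ_[p]] ℚ_[p] ⊗[ℤ_[p]] Ahat :=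
      Algebra.TensorProduct.map (AlgHom.id ℤ_[p] ℚ_[p]) ι
    let ir : Ahat →ₐ[ℤ_[p]] ℚ_[p] ⊗[ℤ_[p]] Ahat := Algebra.TensorProduct.includeRight
    let T : Set (ℚ_[p] ⊗[ℤ_[p]] Ahat) := {x | ∃ b ∈ B, ∃ y : Ahat, x = Φ b + ir y}
    ((∃ S : Subring (ℚ_[p] ⊗[ℤ_[p]] Ahat), (S : Set (ℚ_[p] ⊗[ℤ_[p]] Ahat)) = T) ∧
      T = (AddSubgroup.closure {z : ℚ_[p] ⊗[ℤ_[p]] Ahat |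
            ∃ (y : Ahat) (b : ℚ_[p] ⊗[ℤ_[p]] A), b ∈ B ∧ z = ir y * Φ b} :
          AddSubgroup (ℚ_[p] ⊗[ℤ_[p]] Ahat))) ∧
    ∀ n : ℕ,
      (∀ x ∈ T, ∃ b ∈ B, ∃ t ∈ T,
        x - Φ b = (p : ℚ_[p] ⊗[ℤ_[p]] Ahat) ^ n * t) ∧
      (∀ b ∈ B, (∃ t ∈ T, Φ b = (p : ℚ_[p] ⊗[ℤ_[p]] Ahat) ^ n * t) →
        ∃ b' ∈ B, b = (p : ℚ_[p] ⊗[ℤ_[p]] A) ^ n * b') :=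
  stmt_15_general p (hp := hp) A Ahat ι hι htf B hAB
end

section
/- Let K be a field of characteristic zero, A an associative K-algebra, and B ⊇ A an extension generated as a ring by A together with a single element x such that: x^n = a for some unit a ∈ A^× and some n ≥ 1, and x normalizes A (xAx⁻¹ = A). If C is an extension of B that is flat as a left (respectively right) A-module, then C is flat as a left (respectively right) B-module. -/
/-- The equational criterion for flatness: `C` is flat as a left module over `R` (acting
through the ring homomorphism `ρ`) iff every linear relation `∑ ρ(aᵢ) xᵢ = 0` in `C` can be
trivialised. -/
def IsLeftFlatRingHom {R C : Type*} [Ring R] [Ring C] (ρ : R →+* C) : Prop :=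
  ∀ (k : ℕ) (a : Fin k → R) (x : Fin k → C),
    (∑ i, ρ (a i) * x i) = 0 →
      ∃ (l : ℕ) (b : Fin k → Fin l → R) (y : Fin l → C),
        (∀ i, x i = ∑ j, ρ (b i j) * y j) ∧ ∀ j, (∑ i, a i * b i j) = 0

/-- The equational criterion for flatness of `C` as a right module over `R` (acting through
`ρ`). -/
def IsRightFlatRingHom {R C : Type*} [Ring R] [Ring C] (ρ : R →+* C) : Prop :=
  ∀ (k : ℕ) (a : Fin k → R) (x : Fin k → C),
    (∑ i, x i * ρ (a i)) = 0 →
      ∃ (l : ℕ) (b : Fin l → Fin k → R) (y : Fin l → C),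
        (∀ i, x i = ∑ j, y j * ρ (b j i)) ∧ ∀ j, (∑ i, b j i * a i) = 0

/-! The units `1, x, …, x ^ (n - 1)` span `B` over `A`, normalise `A` and multiply like `ZMod n` up
to factors in `A`. Multiplying a relation `∑ bᵢ zᵢ = 0` in `C` (`bᵢ ∈ B`) by each `x ^ μ` and
expanding in this spanning set gives a system of relations over `A` among the elements
`x ^ p zᵢ`. Flatness over `A` trivialises the system; transporting it back by `x ^ (-p)` and
averaging over `p` (dividing by `n`, possible in characteristic zero) trivialises the original
relation. The right-module case is the left one for the opposite rings. -/

theorem RingHom.sum_map_sum_mul_assoc {R C ι κ : Type*} [Ring R] [Ring C] [Fintype ι] [Fintype κ]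
    (ρ : R →+* C) (c : ι → R) (b : ι → κ → R) (y : κ → C) :
    ∑ j, ρ (∑ i, c i * b i j) * y j = ∑ i, ρ (c i) * ∑ j, ρ (b i j) * y j := by
  simp only [map_sum, map_mul, Finset.sum_mul, Finset.mul_sum, mul_assoc]
  exact Finset.sum_comm

namespace IsLeftFlatRingHom

variable {R C : Type*} [Ring R] [Ring C] {ρ : R →+* C}

theorem exists_factorization (h : IsLeftFlatRingHom ρ) {ι : Type*} [Fintype ι]
    (a : ι → R) (x : ι → C) (hx : ∑ i, ρ (a i) * x i = 0) :
    ∃ (l : ℕ) (b : ι → Fin l → R) (y : Fin l → C),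
      (∀ i, x i = ∑ j, ρ (b i j) * y j) ∧ ∀ j, ∑ i, a i * b i j = 0 := by
  let e := Fintype.equivFin ι
  obtain ⟨l, b, y, hxy, hab⟩ := h _ (a ∘ e.symm) (x ∘ e.symm)
    (by rw [← hx]; exact e.symm.sum_comp fun i => ρ (a i) * x i)
  refine ⟨l, fun i => b (e i), y, fun i => by simpa using hxy (e i), fun j => ?_⟩
  rw [← hab j, ← e.sum_comp]
  simp

theorem exists_factorization_of_forall (h : IsLeftFlatRingHom ρ) {κ ι : Type*}
    [Finite κ] [Fintype ι] (a : κ → ι → R) (x : ι → C) (hx : ∀ t, ∑ i, ρ (a t i) * x i = 0) :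
    ∃ (l : ℕ) (b : ι → Fin l → R) (y : Fin l → C),
      (∀ i, x i = ∑ j, ρ (b i j) * y j) ∧ ∀ t j, ∑ i, a t i * b i j = 0 := by
  obtain ⟨m, ⟨e⟩⟩ := Finite.exists_equiv_fin κ
  suffices ∀ (m : ℕ) (a : Fin m → ι → R), (∀ t, ∑ i, ρ (a t i) * x i = 0) →
      ∃ (l : ℕ) (b : ι → Fin l → R) (y : Fin l → C),
        (∀ i, x i = ∑ j, ρ (b i j) * y j) ∧ ∀ t j, ∑ i, a t i * b i j = 0 by
    obtain ⟨l, b, y, hxy, hab⟩ := this m (a ∘ e.symm) fun t => hx _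
    exact ⟨l, b, y, hxy, fun t j => by simpa using hab (e t) j⟩
  intro m
  induction m with
  | zero =>
    intro a _
    obtain ⟨l, b, y, hxy, -⟩ := h.exists_factorization 0 x (by simp)
    exact ⟨l, b, y, hxy, fun t => t.elim0⟩
  | succ m ih =>
    intro a ha
    obtain ⟨l, b, y, hxy, hab⟩ := ih (Fin.tail a) fun t => ha t.succ
    have hy : ∑ j, ρ (∑ i, a 0 i * b i j) * y j = 0 := by
      simpa only [ρ.sum_map_sum_mul_assoc, ← hxy] using ha 0
    obtain ⟨l', b', y', hyy', hab'⟩ := h.exists_factorization _ y hy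
    have hab_comp : ∀ (c : ι → R) s, ∑ i, c i * ∑ j, b i j * b' j s =
        ∑ j, (∑ i, c i * b i j) * b' j s := fun c s =>
      ((RingHom.id R).sum_map_sum_mul_assoc c b fun j => b' j s).symm
    refine ⟨l', fun i s => ∑ j, b i j * b' j s, y', fun i => ?_, Fin.cases ?_ fun t s => ?_⟩
    · rw [ρ.sum_map_sum_mul_assoc, hxy i]
      simp only [← hyy']
    · intro s
      rw [hab_comp]
      exact hab' s
    · rw [hab_comp]
      simp only [show ∀ j, ∑ i, a t.succ i * b i j = 0 from hab t, zero_mul,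
        Finset.sum_const_zero]

end IsLeftFlatRingHom

theorem isRightFlatRingHom_iff_op {R C : Type*} [Ring R] [Ring C] (ρ : R →+* C) :
    IsRightFlatRingHom ρ ↔ IsLeftFlatRingHom (RingHom.op ρ) := by
  constructor
  · intro h k a x hx
    obtain ⟨l, b, y, hxy, hab⟩ := h k (fun i => (a i).unop) (fun i => (x i).unop)
      (by simpa using congrArg MulOpposite.unop hx)
    exact ⟨l, fun i j => .op (b j i), fun j => .op (y j),
      fun i => MulOpposite.unop_injective (by simpa using hxy i),
      fun j => MulOpposite.unop_injective (by simpa using hab j)⟩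
  · intro h k a x hx
    obtain ⟨l, b, y, hxy, hab⟩ := h k (fun i => .op (a i)) (fun i => .op (x i))
      (by simpa using congrArg MulOpposite.op hx)
    exact ⟨l, fun j i => (b i j).unop, fun j => (y j).unop,
      fun i => MulOpposite.op_injective (by simpa using hxy i),
      fun j => MulOpposite.op_injective (by simpa using hab j)⟩

section CrossedExtension

variable {R B G : Type*} [Ring R] [Ring B] [AddGroup G] (φ : R →+* B) (g : G → Bˣ)

/-- The shape of a crossed product of `R` by `G`, except that the `g p` need not be independent
over `R`. -/
structure IsCrossedExtension [Fintype G] : Prop where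
  conj_mem : ∀ p r, (g p : B) * φ r * ↑(g p)⁻¹ ∈ φ.range
  cocycle_mem : ∀ p q, ((g p * g q * (g (p + q))⁻¹ : Bˣ) : B) ∈ φ.range
  exists_sum_eq : ∀ b, ∃ α : G → R, b = ∑ p, φ (α p) * g p

variable {φ g}

theorem exists_map_eq_mul_mul_mul_inv (hconj : ∀ p r, (g p : B) * φ r * ↑(g p)⁻¹ ∈ φ.range)
    (hcocycle : ∀ p q, ((g p * g q * (g (p + q))⁻¹ : Bˣ) : B) ∈ φ.range) (p q : G) (r : R) :
    ∃ c, φ c = g p * φ r * g q * ↑(g (p + q))⁻¹ := by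
  obtain ⟨c₁, hc₁⟩ := hconj p r
  obtain ⟨c₂, hc₂⟩ := hcocycle p q
  refine ⟨c₁ * c₂, ?_⟩
  rw [map_mul, hc₁, hc₂]
  simp only [Units.val_mul, mul_assoc, Units.inv_mul_cancel_left]

theorem exists_sum_eq_of_mem_closure [Fintype G]
    (hconj : ∀ p r, (g p : B) * φ r * ↑(g p)⁻¹ ∈ φ.range)
    (hcocycle : ∀ p q, ((g p * g q * (g (p + q))⁻¹ : Bˣ) : B) ∈ φ.range) (hg : g 0 = 1) {b : B}
    (hb : b ∈ Subring.closure (Set.range φ ∪ Set.range fun p => (g p : B))) :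
    ∃ α : G → R, b = ∑ p, φ (α p) * g p := by
  classical
  have single : ∀ r p, ∃ α : G → R, φ r * g p = ∑ q, φ (α q) * g q := fun r p =>
    ⟨Pi.single p r, by simp [Pi.single_apply, apply_ite φ]⟩
  have add : ∀ b₁ b₂ : B, (∃ α : G → R, b₁ = ∑ p, φ (α p) * g p) →
      (∃ α : G → R, b₂ = ∑ p, φ (α p) * g p) → ∃ α : G → R, b₁ + b₂ = ∑ p, φ (α p) * g p := by
    rintro _ _ ⟨α, rfl⟩ ⟨β, rfl⟩
    exact ⟨α + β, by simp [add_mul, Finset.sum_add_distrib]⟩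
  induction hb using Subring.closure_induction with
  | mem b hb =>
    rcases hb with ⟨r, rfl⟩ | ⟨p, rfl⟩
    · simpa [hg] using single r 0
    · simpa using single 1 p
  | zero => exact ⟨0, by simp⟩
  | one => simpa [hg] using single 1 0
  | add _ _ _ _ h₁ h₂ => exact add _ _ h₁ h₂
  | neg _ _ h =>
    obtain ⟨α, rfl⟩ := h
    exact ⟨-α, by simp [neg_mul]⟩
  | mul _ _ _ _ h₁ h₂ =>
    obtain ⟨α, rfl⟩ := h₁
    obtain ⟨β, rfl⟩ := h₂
    rw [Finset.sum_mul_sum]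
    refine Finset.sum_induction _ _ add ⟨0, by simp⟩ fun p _ =>
      Finset.sum_induction _ _ add ⟨0, by simp⟩ fun q _ => ?_
    obtain ⟨c, hc⟩ := exists_map_eq_mul_mul_mul_inv hconj hcocycle p q (β q)
    obtain ⟨γ, hγ⟩ := single (α p * c) (p + q)
    refine ⟨γ, hγ ▸ ?_⟩
    rw [map_mul, hc]
    simp only [mul_assoc, Units.inv_mul, mul_one]

section

variable {α : G → R} {c : G → G → R}
  (hc : ∀ μ p, φ (c μ p) = g μ * φ (α (-μ + p)) * g (-μ + p) * ↑(g p)⁻¹)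
include hc

theorem sum_map_mul_eq_mul_sum_of_eq [Fintype G] (μ : G) :
    ∑ p, φ (c μ p) * g p = g μ * ∑ q, φ (α q) * g q := by
  simp only [hc, Units.inv_mul, mul_one, mul_assoc, ← Finset.mul_sum]
  exact congrArg _ (Equiv.sum_comp (Equiv.addLeft (-μ)) fun q => φ (α q) * g q)

theorem sum_inv_mul_map_eq_sum_mul_of_eq [Fintype G] (p : G) :
    ∑ μ, ↑(g μ)⁻¹ * φ (c μ p) = (∑ q, φ (α q) * g q) * ↑(g p)⁻¹ := by
  simp only [hc, mul_assoc, Units.inv_mul_cancel_left, Finset.sum_mul]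
  exact ((Equiv.neg G).trans (Equiv.addRight p)).sum_comp fun q => φ (α q) * (g q * ↑(g p)⁻¹)

end

end CrossedExtension

theorem IsCrossedExtension.isLeftFlatRingHom {R B C G : Type*} [Ring R] [Ring B] [Ring C]
    [AddGroup G] [Fintype G] {φ : R →+* B} {g : G → Bˣ} (hB : IsCrossedExtension φ g)
    (hG : IsUnit (Fintype.card G : B)) (ψ : B →+* C) (h : IsLeftFlatRingHom (ψ.comp φ)) :
    IsLeftFlatRingHom ψ := by
  intro k b z hz
  choose α hα using fun i => hB.exists_sum_eq (b i)
  choose c hc using fun i μ p => by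
    simpa only [add_neg_cancel_left] using
      exists_map_eq_mul_mul_mul_inv hB.conj_mem hB.cocycle_mem μ (-μ + p) (α i (-μ + p))
  have hc_left : ∀ i μ, ∑ p, φ (c i μ p) * g p = g μ * b i := fun i μ => by
    rw [hα i]
    exact sum_map_mul_eq_mul_sum_of_eq (hc i) μ
  have hc_right : ∀ i p, ∑ μ, ↑(g μ)⁻¹ * φ (c i μ p) = b i * ↑(g p)⁻¹ := fun i p => by
    rw [hα i]
    exact sum_inv_mul_map_eq_sum_mul_of_eq (hc i) p
  have hrel : ∀ μ, ∑ ip : Fin k × G, (ψ.comp φ) (c ip.1 μ ip.2) * (ψ (g ip.2) * z ip.1) = 0 := by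
    intro μ
    calc ∑ ip : Fin k × G, (ψ.comp φ) (c ip.1 μ ip.2) * (ψ (g ip.2) * z ip.1)
        = ∑ i, ψ (∑ p, φ (c i μ p) * g p) * z i := by
          simp only [Fintype.sum_prod_type, map_sum, map_mul, Finset.sum_mul, mul_assoc,
            RingHom.comp_apply]
      _ = ψ (g μ) * ∑ i, ψ (b i) * z i := by
          simp only [hc_left, map_mul, mul_assoc, Finset.mul_sum]
      _ = 0 := by rw [hz, mul_zero]
  obtain ⟨l, d, y, hy, hcd⟩ :=
    h.exists_factorization_of_forall (fun μ (ip : Fin k × G) => c ip.1 μ ip.2) _ hrel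
  set ν : B := ↑hG.unit⁻¹
  have hν_mul : ν * (Fintype.card G : B) = 1 := hG.val_inv_mul
  have hν : ∀ b, Commute ν b := fun b =>
    Commute.units_inv_left (by rw [IsUnit.unit_spec]; exact Nat.cast_commute _ b)
  refine ⟨l, fun i j => ν * ∑ p, ↑(g p)⁻¹ * φ (d (i, p) j), y, fun i => ?_, fun j => ?_⟩
  · calc z i = ψ ν * ∑ p : G, ψ ↑(g p)⁻¹ * (ψ (g p) * z i) := by
          simp only [← mul_assoc, ← map_mul, Units.inv_mul, map_one, one_mul, Finset.sum_const,
            Finset.card_univ, nsmul_eq_mul, ← map_natCast ψ, hν_mul]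
      _ = ∑ j, ψ (ν * ∑ p, ↑(g p)⁻¹ * φ (d (i, p) j)) * y j := by
          simp only [fun p => hy (i, p), map_mul, mul_assoc, ← Finset.mul_sum,
            ψ.sum_map_sum_mul_assoc, RingHom.comp_apply]
  · calc ∑ i, b i * (ν * ∑ p, ↑(g p)⁻¹ * φ (d (i, p) j))
        = ν * ∑ ip : Fin k × G, ∑ μ, ↑(g μ)⁻¹ * φ (c ip.1 μ ip.2) * φ (d ip j) := by
          rw [Fintype.sum_prod_type, Finset.mul_sum]
          refine Finset.sum_congr rfl fun i _ => ?_
          rw [← mul_assoc, ← (hν _).eq, mul_assoc, Finset.mul_sum]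
          refine congrArg _ (Finset.sum_congr rfl fun p _ => ?_)
          rw [← mul_assoc, ← hc_right, Finset.sum_mul]
      _ = ν * ∑ μ, ↑(g μ)⁻¹ * φ (∑ ip : Fin k × G, c ip.1 μ ip.2 * d ip j) := by
          simp only [map_sum, map_mul, Finset.mul_sum, mul_assoc]
          rw [Finset.sum_comm]
      _ = 0 := by simp only [hcd, map_zero, mul_zero, Finset.sum_const_zero]

theorem isCrossedExtension_zmod_pow {R B : Type*} [Ring R] [Ring B] {φ : R →+* B} (u : Bˣ)
    (n : ℕ) [NeZero n] (hconj : ∀ r, (u : B) * φ r * ↑u⁻¹ ∈ φ.range)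
    (hpow : (u : B) ^ n ∈ φ.range) (hgen : Subring.closure (insert (u : B) (Set.range φ)) = ⊤) :
    IsCrossedExtension φ fun p : ZMod n => u ^ p.val := by
  have hconj_pow : ∀ m r, ((u ^ m : Bˣ) : B) * φ r * ↑(u ^ m)⁻¹ ∈ φ.range := by
    intro m
    induction m with
    | zero => simp
    | succ m ih =>
      intro r
      obtain ⟨r', hr'⟩ := ih r
      rw [pow_succ', mul_inv_rev]
      simpa only [Units.val_mul, hr', mul_assoc] using hconj r'
  have hcocycle : ∀ p q : ZMod n,
      ((u ^ p.val * u ^ q.val * (u ^ (p + q).val)⁻¹ : Bˣ) : B) ∈ φ.range := by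
    intro p q
    rw [← pow_add, ← Nat.mod_add_div (p.val + q.val) n, ← ZMod.val_add, pow_add,
      (Commute.pow_pow_self u _ _).eq, mul_inv_cancel_right, Units.val_pow_eq_pow_val, pow_mul]
    exact pow_mem hpow _
  refine ⟨fun p => hconj_pow p.val, hcocycle, fun b => ?_⟩
  have hu : (u : B) ∈
      Subring.closure (Set.range φ ∪ Set.range fun p : ZMod n => ((u ^ p.val : Bˣ) : B)) := by
    obtain ⟨r, hr⟩ := hpow
    have : (u : B) = φ (r ^ (1 / n)) * ↑(u ^ (1 : ZMod n).val) := by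
      rw [map_pow, hr, ← pow_mul, Units.val_pow_eq_pow_val, ← pow_add, ZMod.val_one_eq_one_mod,
        Nat.div_add_mod, pow_one]
    rw [this]
    exact Subring.mul_mem _ (Subring.subset_closure (Or.inl ⟨_, rfl⟩))
      (Subring.subset_closure (Or.inr ⟨1, rfl⟩))
  refine exists_sum_eq_of_mem_closure (fun p => hconj_pow p.val) hcocycle (by simp) ?_
  refine Subring.closure_le.mpr (Set.insert_subset hu fun b hb => ?_) (hgen ▸ Subring.mem_top b)
  exact Subring.subset_closure (Or.inl hb)

open MulOpposite in
theorem Subring.closure_insert_range_op {R B : Type*} [Ring R] [Ring B] (φ : R →+* B) (x : B)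
    (h : Subring.closure (insert x (Set.range φ)) = ⊤) :
    Subring.closure (insert (op x) (Set.range (RingHom.op φ))) = ⊤ := by
  have : insert (op x) (Set.range (RingHom.op φ)) = unop ⁻¹' insert x (Set.range φ) := by
    ext b
    obtain ⟨b, rfl⟩ := op_surjective b
    simp
  rw [this, ← Subring.op_closure, h, Subring.op_top]

theorem Subalgebra.closure_insert_eq_top_of_adjoin_eq_top {K B : Type*} [CommRing K] [Ring B]
    [Algebra K B] (A : Subalgebra K B) (x : B) (h : Algebra.adjoin K (insert x (A : Set B)) = ⊤) :
    Subring.closure (insert x (Set.range A.val)) = ⊤ := by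
  have hK : Set.range (algebraMap K B) ∪ insert x (A : Set B) = insert x (A : Set B) :=
    Set.union_eq_self_of_subset_left fun _ ⟨k, hk⟩ => Or.inr (hk ▸ A.algebraMap_mem k)
  rw [show Set.range A.val = A from Subtype.range_coe, ← hK, ← Algebra.adjoin_eq_ring_closure, h,
    Algebra.top_toSubring]

theorem stmt_16_general {K B C : Type*} [Field K] [CharZero K] [Ring B] [Algebra K B]
    [Ring C] [Algebra K C]
    (A : Subalgebra K B) (x : B) (n : ℕ) (hn : 1 ≤ n)
    (hgen : Algebra.adjoin K (insert x (A : Set B)) = ⊤)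
    (a : B) (ha : a ∈ A) (hxn : x ^ n = a)
    (x' : B) (hxx' : x * x' = 1) (hx'x : x' * x = 1)
    (hnorm : ∀ b ∈ A, x * b * x' ∈ A) (hnorm' : ∀ b ∈ A, x' * b * x ∈ A)
    (ψ : B →ₐ[K] C) :
    (IsLeftFlatRingHom ((ψ.comp A.val).toRingHom) → IsLeftFlatRingHom ψ.toRingHom) ∧
    (IsRightFlatRingHom ((ψ.comp A.val).toRingHom) → IsRightFlatRingHom ψ.toRingHom) := by
  have : NeZero n := ⟨by omega⟩
  have hclosure := A.closure_insert_eq_top_of_adjoin_eq_top x hgen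
  have hunit : IsUnit (Fintype.card (ZMod n) : B) := by
    rw [ZMod.card, ← map_natCast (algebraMap K B)]
    exact (isUnit_iff_ne_zero.mpr (NeZero.ne _)).map _
  constructor
  · exact (isCrossedExtension_zmod_pow (φ := A.val.toRingHom) ⟨x, x', hxx', hx'x⟩ n
      (fun r => ⟨⟨_, hnorm _ r.2⟩, rfl⟩) ⟨⟨a, ha⟩, hxn.symm⟩ hclosure).isLeftFlatRingHom
      hunit ψ.toRingHom
  · rw [isRightFlatRingHom_iff_op, isRightFlatRingHom_iff_op]
    exact (isCrossedExtension_zmod_pow (φ := RingHom.op A.val.toRingHom)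
      ⟨.op x, .op x', congrArg MulOpposite.op hx'x, congrArg MulOpposite.op hxx'⟩ n
      (fun r => ⟨.op ⟨_, hnorm' _ r.unop.2⟩, MulOpposite.unop_injective (by simp [mul_assoc])⟩)
      ⟨.op ⟨a, ha⟩, congrArg MulOpposite.op hxn.symm⟩
      (Subring.closure_insert_range_op _ x hclosure)).isLeftFlatRingHom
      (by simpa using hunit.op) (RingHom.op ψ.toRingHom)

/-- Lemma 5.3.17: let `K` be a field of characteristic zero, `B` a `K`-algebra, `A` a
`K`-subalgebra of `B`, and `x ∈ B` such that `B` is generated as a ring by `A` and `x`,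
`x ^ n = a` for some unit `a` of `A`, and `x` is a unit normalising `A`.  If `C` is an
extension of `B` which is flat as a left (resp. right) `A`-module, then `C` is flat as a
left (resp. right) `B`-module. -/
theorem stmt_16 {K B C : Type*} [Field K] [CharZero K] [Ring B] [Algebra K B]
    [Ring C] [Algebra K C]
    (A : Subalgebra K B) (x : B) (n : ℕ) (hn : 1 ≤ n)
    (hgen : Algebra.adjoin K (insert x (A : Set B)) = ⊤)
    (a a' : B) (ha : a ∈ A) (ha' : a' ∈ A)
    (haunit : a * a' = 1) (haunit' : a' * a = 1) (hxn : x ^ n = a)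
    (x' : B) (hxx' : x * x' = 1) (hx'x : x' * x = 1)
    (hnorm : ∀ b ∈ A, x * b * x' ∈ A) (hnorm' : ∀ b ∈ A, x' * b * x ∈ A)
    (ψ : B →ₐ[K] C) (hψ : Function.Injective ψ) :
    (IsLeftFlatRingHom ((ψ.comp A.val).toRingHom) → IsLeftFlatRingHom ψ.toRingHom) ∧
    (IsRightFlatRingHom ((ψ.comp A.val).toRingHom) → IsRightFlatRingHom ψ.toRingHom) :=
  stmt_16_general A x n hn hgen a ha hxn x' hxx' hx'x hnorm hnorm' ψ
end

section
/- Let K be a discretely valued complete nonarchimedean field with ring of integers O_K and uniformizer π, let G be a group acting linearly on a K-vector space V, and let M be an O_K-lattice in V. Then G preserves the commensurability class of M (i.e. for each g ∈ G, the lattice gM is commensurable with M) if and only if every element of G acts as a continuous automorphism of V when V is equipped with the locally convex topology defined by the gauge seminorm of M. -/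
/-- An `O_K`-lattice in a `K`-vector space `V`: an `O_K`-submodule which spans `V` over `K`
(equivalently, which is absorbing). -/
def IsLatticeIn (K : Type*) [NormedField K] {V : Type*} [AddCommGroup V] [Module K V]
    (M : Set V) : Prop :=
  (0 : V) ∈ M ∧ (∀ x ∈ M, ∀ y ∈ M, x + y ∈ M) ∧
    (∀ c : K, ‖c‖ ≤ 1 → ∀ x ∈ M, c • x ∈ M) ∧
    ∀ v : V, ∃ c : K, c ≠ 0 ∧ c • v ∈ M

/-- Two lattices are commensurable if `α • M₂ ⊆ M₁ ⊆ α⁻¹ • M₂` for some nonzero `α ∈ K`. -/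
def AreCommensurable (K : Type*) [NormedField K] {V : Type*} [AddCommGroup V] [Module K V]
    (M₁ M₂ : Set V) : Prop :=
  ∃ α : K, α ≠ 0 ∧ (∀ m ∈ M₂, α • m ∈ M₁) ∧ ∀ m ∈ M₁, α • m ∈ M₂

/-- The locally convex topology on `V` defined by the gauge seminorm of the lattice `M`:
the sets `v + c • M` (`c ≠ 0`) form a basis of this topology. -/
def gaugeTopology (K : Type*) [NormedField K] {V : Type*} [AddCommGroup V] [Module K V]
    (M : Set V) : TopologicalSpace V :=
  TopologicalSpace.generateFrom
    {U : Set V | ∃ (v : V) (c : K), c ≠ 0 ∧ U = {w : V | ∃ m ∈ M, w = v + c • m}}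

/-- `K` is discretely valued: the value group of `K^×` is generated by the norm of a
uniformiser. -/
def IsDiscretelyValued (K : Type*) [NormedField K] : Prop :=
  ∃ π : K, 0 < ‖π‖ ∧ ‖π‖ < 1 ∧ ∀ x : K, x ≠ 0 → ∃ n : ℤ, ‖x‖ = ‖π‖ ^ n

/-!
For a lattice `M`, the translates `v + c • M` with `c ≠ 0` are a basis of the gauge topology, so a
`K`-linear map `f` is continuous exactly when it is bounded for the gauge, i.e. `c • f '' M ⊆ M`
for some `c ≠ 0`. Each `g ∈ G` acts bijectively with inverse `g⁻¹`, and `g • M` is commensurable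
with `M` exactly when both `g` and `g⁻¹` are bounded in this sense.
-/

/-- In terms of the gauges: `q_N (f v) ≤ ‖c‖⁻¹ * q_M v` for all `v`. -/
def IsGaugeBounded (K : Type*) [NormedField K] {V W : Type*} [AddCommGroup V] [Module K V]
    [AddCommGroup W] [Module K W] (M : Set V) (N : Set W) (f : V → W) : Prop :=
  ∃ c : K, c ≠ 0 ∧ ∀ m ∈ M, c • f m ∈ N

section Lattice

open Topology

variable {K : Type*} [NormedField K] {V W : Type*} [AddCommGroup V] [Module K V]
  [AddCommGroup W] [Module K W] {M : Set V} {N : Set W}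

theorem IsLatticeIn.div_smul_mem (hM : IsLatticeIn K M) {c d : K} (hdc : ‖d‖ ≤ ‖c‖) {x : V}
    (hx : x ∈ M) : (d / c) • x ∈ M :=
  hM.2.2.1 _ (by rw [norm_div]; exact div_le_one_of_le₀ hdc (norm_nonneg c)) _ hx

theorem IsLatticeIn.smul_mem_of_norm_le (hM : IsLatticeIn K M) {c d : K} (hc : c ≠ 0)
    (hdc : ‖d‖ ≤ ‖c‖) {x : V} (hx : c • x ∈ M) : d • x ∈ M := by
  simpa [smul_smul, div_mul_cancel₀ d hc] using hM.div_smul_mem hdc hx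

theorem isOpen_gaugeTopology_iff (hM : IsLatticeIn K M) (S : Set V) :
    IsOpen[gaugeTopology K M] S ↔ ∀ w ∈ S, ∃ c : K, c ≠ 0 ∧ ∀ m ∈ M, w + c • m ∈ S := by
  let := gaugeTopology K M
  constructor
  · intro hS
    induction hS with
    | basic U hU =>
      obtain ⟨v, c, hc, rfl⟩ := hU
      rintro _ ⟨m₀, hm₀, rfl⟩
      exact ⟨c, hc, fun m hm => ⟨m₀ + m, hM.2.1 _ hm₀ _ hm, by rw [smul_add, add_assoc]⟩⟩
    | univ => exact fun _ _ => ⟨1, one_ne_zero, fun _ _ => trivial⟩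
    | inter U₁ U₂ _ _ ih₁ ih₂ =>
      intro w hw
      obtain ⟨c₁, hc₁, h₁⟩ := ih₁ w hw.1
      obtain ⟨c₂, hc₂, h₂⟩ := ih₂ w hw.2
      have shrink {c d : K} {U : Set V} (hc : c ≠ 0) (hdc : ‖d‖ ≤ ‖c‖)
          (hU : ∀ m ∈ M, w + c • m ∈ U) (m : V) (hm : m ∈ M) : w + d • m ∈ U := by
        simpa [smul_smul, mul_div_cancel₀ d hc] using hU _ (hM.div_smul_mem hdc hm)
      rcases le_total ‖c₁‖ ‖c₂‖ with hle | hle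
      · exact ⟨c₁, hc₁, fun m hm => ⟨h₁ m hm, shrink hc₂ hle h₂ m hm⟩⟩
      · exact ⟨c₂, hc₂, fun m hm => ⟨shrink hc₁ hle h₁ m hm, h₂ m hm⟩⟩
    | sUnion _ _ ih =>
      rintro w ⟨t, ht, hwt⟩
      obtain ⟨c, hc, h⟩ := ih t ht w hwt
      exact ⟨c, hc, fun m hm => ⟨t, ht, h m hm⟩⟩
  · intro h
    refine isOpen_iff_forall_mem_open.2 fun w hw => ?_
    obtain ⟨c, hc, hcS⟩ := h w hw
    refine ⟨{u | ∃ m ∈ M, u = w + c • m}, ?_, ?_, ⟨0, hM.1, by simp⟩⟩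
    · rintro _ ⟨m, hm, rfl⟩
      exact hcS m hm
    · exact TopologicalSpace.isOpen_generateFrom_of_mem ⟨w, c, hc, rfl⟩

theorem IsLatticeIn.isOpen (hM : IsLatticeIn K M) : IsOpen[gaugeTopology K M] M :=
  (isOpen_gaugeTopology_iff hM M).2 fun w hw =>
    ⟨1, one_ne_zero, fun m hm => by simpa using hM.2.1 _ hw _ hm⟩

theorem continuous_gaugeTopology_iff (hM : IsLatticeIn K M) (hN : IsLatticeIn K N)
    (f : V →ₗ[K] W) :
    Continuous[gaugeTopology K M, gaugeTopology K N] f ↔ IsGaugeBounded K M N f := by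
  constructor
  · intro hf
    obtain ⟨c, hc, hcN⟩ := (isOpen_gaugeTopology_iff hM _).1 (continuous_def.1 hf _ hN.isOpen) 0
      (by simpa using hN.1)
    exact ⟨c, hc, fun m hm => by simpa using hcN m hm⟩
  · rintro ⟨c, hc, hcN⟩
    refine continuous_def.2 fun U hU => (isOpen_gaugeTopology_iff hM _).2 fun w hw => ?_
    obtain ⟨d, hd, hdU⟩ := (isOpen_gaugeTopology_iff hN U).1 hU (f w) hw
    refine ⟨d * c, mul_ne_zero hd hc, fun m hm => ?_⟩
    have hfw : f (w + (d * c) • m) = f w + d • (c • f m) := by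
      rw [map_add, map_smul, mul_smul]
    exact (hfw ▸ hdU _ (hcN m hm) : f (w + (d * c) • m) ∈ U)

theorem areCommensurable_image_iff (hM : IsLatticeIn K M) (e : V ≃ₗ[K] V) :
    AreCommensurable K (e '' M) M ↔ IsGaugeBounded K M M e ∧ IsGaugeBounded K M M e.symm := by
  have mem_image (α : K) (m : V) : α • m ∈ e '' M ↔ α • e.symm m ∈ M := by
    rw [e.image_eq_preimage_symm, Set.mem_preimage, map_smul]
  constructor
  · rintro ⟨α, hα, hsymm, he⟩
    exact ⟨⟨α, hα, fun m hm => he _ (Set.mem_image_of_mem e hm)⟩,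
      ⟨α, hα, fun m hm => (mem_image α m).1 (hsymm m hm)⟩⟩
  · rintro ⟨⟨c, hc, hce⟩, ⟨d, hd, hds⟩⟩
    obtain ⟨α, hα, hαc, hαd⟩ : ∃ α : K, α ≠ 0 ∧ ‖α‖ ≤ ‖c‖ ∧ ‖α‖ ≤ ‖d‖ := by
      rcases le_total ‖c‖ ‖d‖ with h | h
      exacts [⟨c, hc, le_rfl, h⟩, ⟨d, hd, h, le_rfl⟩]
    exact ⟨α, hα, fun m hm => (mem_image α m).2 (hM.smul_mem_of_norm_le hd hαd (hds m hm)),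
      Set.forall_mem_image.2 fun m hm => hM.smul_mem_of_norm_le hc hαc (hce m hm)⟩

end Lattice

theorem stmt_18_general {K : Type*} [NontriviallyNormedField K]
    {G V : Type*} [Group G] [AddCommGroup V] [Module K V]
    [DistribMulAction G V] [SMulCommClass G K V]
    (M : Set V) (hM : IsLatticeIn K M) :
    (∀ g : G, AreCommensurable K ((fun v : V => g • v) '' M) M) ↔
      ∀ g : G, @Continuous V V (gaugeTopology K M) (gaugeTopology K M)
        (fun v : V => g • v) := by
  have acts_continuous (g : G) :=
    continuous_gaugeTopology_iff hM hM (DistribMulAction.toLinearEquiv K V g).toLinearMap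
  have commensurable (g : G) :=
    areCommensurable_image_iff hM (DistribMulAction.toLinearEquiv K V g)
  constructor
  · exact fun h g => (acts_continuous g).2 ((commensurable g).1 (h g)).1
  · exact fun h g => (commensurable g).2
      ⟨(acts_continuous g).1 (h g), (acts_continuous g⁻¹).1 (h g⁻¹)⟩

/-- Lemma 6.5.1: a group `G` acting `K`-linearly on a `K`-vector space `V` preserves the
commensurability class of a lattice `M` if and only if every element of `G` acts as a
continuous automorphism of `V` for the topology defined by the gauge seminorm of `M`. -/
theorem stmt_18 {K : Type*} [NontriviallyNormedField K] [CompleteSpace K]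
    [IsUltrametricDist K] (hdv : IsDiscretelyValued K)
    {G V : Type*} [Group G] [AddCommGroup V] [Module K V]
    [DistribMulAction G V] [SMulCommClass G K V]
    (M : Set V) (hM : IsLatticeIn K M) :
    (∀ g : G, AreCommensurable K ((fun v : V => g • v) '' M) M) ↔
      ∀ g : G, @Continuous V V (gaugeTopology K M) (gaugeTopology K M)
        (fun v : V => g • v) :=
  stmt_18_general M hM
end

section
/- Let K be a discretely valued complete nonarchimedean field, G a group acting linearly on a K-vector space V, and M a lattice in V. The following are equivalent: (i) there exists a G-invariant lattice commensurable with M; (ii) there exists a G-invariant seminorm on V defining the same topology as the gauge of M; (iii) G acts as an equicontinuous family of operators on V equipped with the gauge topology of M. Moreover, if V is a topological K-vector space, G is compact and acts continu];y on V, and M is an open lattice, then these conditions are equivalent to the continuity of the G-action on V equipped with the gauge topology of M. -/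
/-- The topology on `V` defined by a (nonarchimedean) seminorm `q`. -/
def seminormTopology {V : Type*} [AddCommGroup V] (q : V → ℝ) : TopologicalSpace V :=
  TopologicalSpace.generateFrom
    {U : Set V | ∃ (v : V) (ε : ℝ), 0 < ε ∧ U = {w : V | q (w - v) < ε}}

section

variable (K : Type*) [NormedField K] {G V : Type*} [Group G] [AddCommGroup V] [Module K V]
  [DistribMulAction G V] [SMulCommClass G K V]

/-- Condition (i): there exists a `G`-invariant lattice commensurable with `M`. -/
def HasInvariantCommensurableLattice (M : Set V) : Prop :=
  ∃ N : Set V, IsLatticeIn K N ∧ (∀ (g : G), ∀ v ∈ N, g • v ∈ N) ∧ AreCommensurable K N M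

/-- Condition (ii): there exists a `G`-invariant (nonarchimedean) seminorm on `V` defining
the same topology as the gauge seminorm of `M`. -/
def HasInvariantGaugeSeminorm (M : Set V) : Prop :=
  ∃ q : V → ℝ, (∀ v : V, 0 ≤ q v) ∧ (∀ (c : K) (v : V), q (c • v) = ‖c‖ * q v) ∧
    (∀ v w : V, q (v + w) ≤ max (q v) (q w)) ∧ (∀ (g : G) (v : V), q (g • v) = q v) ∧
    seminormTopology q = gaugeTopology K M

/-- Condition (iii): `G` acts as an equicontinuous family of operators on `V` equipped with
the gauge topology of `M`. -/
def ActsEquicontinuouslyOnGauge (M : Set V) : Prop :=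
  ∀ U ∈ @nhds V (gaugeTopology K M) 0, ∃ U' ∈ @nhds V (gaugeTopology K M) 0,
    ∀ (g : G), ∀ v ∈ U', g • v ∈ U

end


/-!
(i) ⇒ (ii): the gauge of a `G`-invariant lattice `N` is a `G`-invariant ultrametric seminorm
defining the gauge topology of `N`, and commensurable lattices have the same gauge topology.
(ii) ⇒ (iii): the balls of an invariant seminorm are invariant neighbourhoods of `0`.
(iii) ⇒ (i): if `g • c • M ⊆ M` for all `g`, then `{v | ∀ g, g • v ∈ M}` is an invariant
lattice squeezed between `c • M` and `M`.

For compact `G`, the tube lemma turns joint continuity into equicontinuity. Conversely, the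
gauge topology of an open lattice is coarser than the given topology, so the orbit maps are
continuous for it, and equicontinuity upgrades this to joint continuity.
-/

open TopologicalSpace Set Filter Topology

section Basis

variable {X ι : Type*} {P : ι → Prop} {B : X → ι → Set X} (hP : ∃ i, P i)
  (hmem : ∀ x i, P i → x ∈ B x i) (hsub : ∀ x y i, P i → y ∈ B x i → B y i ⊆ B x i)
  (hdir : ∀ i j, P i → P j → ∃ k, P k ∧ ∀ x, B x k ⊆ B x i ∩ B x j)
include hP hmem hsub hdir

-- `hsub` says that every point of a ball is a centre of it, as for ultrametric balls.
lemma isTopologicalBasis_of_balls :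
    @IsTopologicalBasis X (generateFrom {U | ∃ x i, P i ∧ U = B x i})
      {U | ∃ x i, P i ∧ U = B x i} := by
  let _ := generateFrom {U | ∃ x i, P i ∧ U = B x i}
  refine ⟨?_, ?_, rfl⟩
  · rintro _ ⟨x₁, i, hi, rfl⟩ _ ⟨x₂, j, hj, rfl⟩ y ⟨hy₁, hy₂⟩
    obtain ⟨k, hk, hkij⟩ := hdir i j hi hj
    exact ⟨B y k, ⟨y, k, hk, rfl⟩, hmem y k hk,
      (hkij y).trans (inter_subset_inter (hsub _ _ _ hi hy₁) (hsub _ _ _ hj hy₂))⟩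
  · obtain ⟨i, hi⟩ := hP
    exact eq_univ_of_forall fun x => ⟨B x i, ⟨x, i, hi, rfl⟩, hmem x i hi⟩

lemma mem_nhds_generateFrom_balls_iff {U : Set X} {x : X} :
    U ∈ @nhds X (generateFrom {U | ∃ x i, P i ∧ U = B x i}) x ↔ ∃ i, P i ∧ B x i ⊆ U := by
  let _ := generateFrom {U | ∃ x i, P i ∧ U = B x i}
  rw [(isTopologicalBasis_of_balls hP hmem hsub hdir).mem_nhds_iff]
  constructor
  · rintro ⟨_, ⟨y, i, hi, rfl⟩, hx, hU⟩
    exact ⟨i, hi, (hsub y x i hi hx).trans hU⟩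
  · rintro ⟨i, hi, hU⟩
    exact ⟨B x i, ⟨x, i, hi, rfl⟩, hmem x i hi, hU⟩

end Basis

section Lattice

variable {K : Type*} [NontriviallyNormedField K] {V : Type*} [AddCommGroup V] [Module K V]
  {M N : Set V}

namespace IsLatticeIn

variable (hM : IsLatticeIn K M)
include hM

lemma zero_mem : (0 : V) ∈ M := hM.1

lemma add_mem {x y : V} (hx : x ∈ M) (hy : y ∈ M) : x + y ∈ M := hM.2.1 x hx y hy

lemma smul_mem {c : K} (hc : ‖c‖ ≤ 1) {x : V} (hx : x ∈ M) : c • x ∈ M := hM.2.2.1 c hc x hx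

lemma exists_smul_mem (v : V) : ∃ c : K, c ≠ 0 ∧ c • v ∈ M := hM.2.2.2 v

lemma exists_smul_eq_smul_of_norm_le {b c : K} (h : ‖b‖ ≤ ‖c‖) {m : V} (hm : m ∈ M) :
    ∃ m' ∈ M, b • m = c • m' := by
  rcases eq_or_ne c 0 with rfl | hc
  · rw [norm_zero, norm_le_zero_iff] at h
    exact ⟨m, hm, by rw [h]⟩
  refine ⟨(c⁻¹ * b) • m, hM.smul_mem ?_ hm, by rw [smul_smul, mul_inv_cancel_left₀ hc]⟩
  rw [norm_mul, norm_inv]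
  exact inv_mul_le_one_of_le₀ h (norm_nonneg c)

end IsLatticeIn

def latticeCoset (M : Set V) (x : V) (c : K) : Set V := {w : V | ∃ m ∈ M, w = x + c • m}

variable (hM : IsLatticeIn K M)
include hM

lemma mem_latticeCoset_self (x : V) (c : K) : x ∈ latticeCoset M x c :=
  ⟨0, hM.zero_mem, by rw [smul_zero, add_zero]⟩

lemma latticeCoset_subset_of_mem {x y : V} {c : K} (hy : y ∈ latticeCoset M x c) :
    latticeCoset M y c ⊆ latticeCoset M x c := by
  obtain ⟨m, hm, rfl⟩ := hy
  rintro _ ⟨m', hm', rfl⟩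
  exact ⟨m + m', hM.add_mem hm hm', by rw [smul_add, add_assoc]⟩

lemma latticeCoset_mono {b c : K} (h : ‖b‖ ≤ ‖c‖) (x : V) :
    latticeCoset M x b ⊆ latticeCoset M x c := by
  rintro _ ⟨m, hm, rfl⟩
  obtain ⟨m', hm', e⟩ := hM.exists_smul_eq_smul_of_norm_le h hm
  exact ⟨m', hm', by rw [e]⟩

lemma gaugeTopology_mem_nhds_iff {U : Set V} {x : V} :
    U ∈ @nhds V (gaugeTopology K M) x ↔ ∃ c : K, c ≠ 0 ∧ latticeCoset M x c ⊆ U := by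
  refine mem_nhds_generateFrom_balls_iff (B := latticeCoset M) ⟨1, one_ne_zero⟩
    (fun x c _ => mem_latticeCoset_self hM x c)
    (fun _ _ _ _ hy => latticeCoset_subset_of_mem hM hy) ?_
  intro b c hb hc
  rcases le_total ‖b‖ ‖c‖ with h | h
  · exact ⟨b, hb, fun x => subset_inter subset_rfl (latticeCoset_mono hM h x)⟩
  · exact ⟨c, hc, fun x => subset_inter (latticeCoset_mono hM h x) subset_rfl⟩

lemma exists_latticeCoset_subset_of_mem_nhds {U : Set V} {x : V}
    (hU : U ∈ @nhds V (gaugeTopology K M) x) :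
    ∃ c : K, c ≠ 0 ∧ ‖c‖ ≤ 1 ∧ latticeCoset M x c ⊆ U := by
  obtain ⟨c₀, hc₀, hU⟩ := (gaugeTopology_mem_nhds_iff hM).1 hU
  obtain ⟨c, hc, hlt⟩ := NormedField.exists_norm_lt K (lt_min one_pos (norm_pos_iff.2 hc₀))
  exact ⟨c, norm_pos_iff.1 hc, (hlt.trans_le (min_le_left _ _)).le,
    (latticeCoset_mono hM (hlt.trans_le (min_le_right _ _)).le x).trans hU⟩

lemma mem_nhds_zero_gaugeTopology : M ∈ @nhds V (gaugeTopology K M) 0 :=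
  (gaugeTopology_mem_nhds_iff hM).2
    ⟨1, one_ne_zero, by rintro _ ⟨m, hm, rfl⟩; rwa [zero_add, one_smul]⟩

lemma gaugeTopology_le_of_smul_subset (hN : IsLatticeIn K N) {α : K} (hα : α ≠ 0)
    (hMN : ∀ m ∈ M, α • m ∈ N) : gaugeTopology K M ≤ gaugeTopology K N := by
  refine le_of_nhds_le_nhds fun x U hU => ?_
  obtain ⟨c, hc, hcU⟩ := (gaugeTopology_mem_nhds_iff hN).1 hU
  refine (gaugeTopology_mem_nhds_iff hM).2 ⟨c * α, mul_ne_zero hc hα, ?_⟩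
  rintro _ ⟨m, hm, rfl⟩
  exact hcU ⟨α • m, hMN m hm, by rw [smul_smul]⟩

lemma AreCommensurable.gaugeTopology_eq (hN : IsLatticeIn K N) (h : AreCommensurable K M N) :
    gaugeTopology K M = gaugeTopology K N :=
  let ⟨_, hα, hNM, hMN⟩ := h
  le_antisymm (gaugeTopology_le_of_smul_subset hM hN hα hMN)
    (gaugeTopology_le_of_smul_subset hN hM hα hNM)

end Lattice

section Seminorm

variable {V : Type*} [AddCommGroup V] {q : V → ℝ}

lemma seminormTopology_mem_nhds_iff (hq0 : q 0 = 0)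
    (hmax : ∀ v w : V, q (v + w) ≤ max (q v) (q w)) {U : Set V} {x : V} :
    U ∈ @nhds V (seminormTopology q) x ↔ ∃ ε : ℝ, 0 < ε ∧ {w | q (w - x) < ε} ⊆ U := by
  refine mem_nhds_generateFrom_balls_iff (B := fun x ε => {w | q (w - x) < ε}) ⟨1, one_pos⟩
    (fun x ε hε => show q (x - x) < ε by rwa [sub_self, hq0]) ?_
    (fun ε δ hε hδ => ⟨min ε δ, lt_min hε hδ, fun x w hw =>
      ⟨hw.trans_le (min_le_left ε δ), hw.trans_le (min_le_right ε δ)⟩⟩)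
  intro x y ε _ hy w hw
  calc q (w - x) = q ((w - y) + (y - x)) := by rw [sub_add_sub_cancel]
    _ ≤ max (q (w - y)) (q (y - x)) := hmax _ _
    _ < ε := max_lt hw hy

end Seminorm

section LatticeGauge

variable (K : Type*) [NontriviallyNormedField K] {V : Type*} [AddCommGroup V] [Module K V]

noncomputable def latticeGauge (N : Set V) (v : V) : ℝ :=
  sInf ((‖·‖) '' {α : K | ∃ n ∈ N, v = α • n})

variable {K} {N : Set V}

lemma latticeGauge_nonneg (v : V) : 0 ≤ latticeGauge K N v :=
  Real.sInf_nonneg (by rintro _ ⟨α, -, rfl⟩; exact norm_nonneg α)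

lemma bddBelow_latticeGauge_set (v : V) :
    BddBelow ((‖·‖) '' {α : K | ∃ n ∈ N, v = α • n}) :=
  ⟨0, by rintro _ ⟨α, -, rfl⟩; exact norm_nonneg α⟩

lemma latticeGauge_smul_le_norm {n : V} (hn : n ∈ N) (α : K) :
    latticeGauge K N (α • n) ≤ ‖α‖ :=
  csInf_le (bddBelow_latticeGauge_set _) ⟨α, ⟨n, hn, rfl⟩, rfl⟩

lemma latticeGauge_smul_eq_of_invariant {G : Type*} [Group G] [DistribMulAction G V]
    [SMulCommClass G K V] (hinv : ∀ g : G, ∀ v ∈ N, g • v ∈ N) (g : G) (v : V) :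
    latticeGauge K N (g • v) = latticeGauge K N v := by
  have hset : {α : K | ∃ n ∈ N, g • v = α • n} = {α : K | ∃ n ∈ N, v = α • n} := by
    ext α
    constructor
    · rintro ⟨n, hn, e⟩
      exact ⟨g⁻¹ • n, hinv g⁻¹ n hn, by rw [← smul_comm g⁻¹ α n, ← e, inv_smul_smul]⟩
    · rintro ⟨n, hn, rfl⟩
      exact ⟨g • n, hinv g n hn, smul_comm g α n⟩
  rw [latticeGauge, latticeGauge, hset]

variable (hN : IsLatticeIn K N)
include hN

lemma latticeGauge_lt_iff {v : V} {ε : ℝ} :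
    latticeGauge K N v < ε ↔ ∃ α : K, ‖α‖ < ε ∧ ∃ n ∈ N, v = α • n := by
  obtain ⟨c, hc, hcv⟩ := hN.exists_smul_mem v
  have hne : ((‖·‖) '' {α : K | ∃ n ∈ N, v = α • n}).Nonempty :=
    ⟨_, c⁻¹, ⟨c • v, hcv, by rw [inv_smul_smul₀ hc]⟩, rfl⟩
  rw [latticeGauge, csInf_lt_iff (bddBelow_latticeGauge_set v) hne]
  constructor
  · rintro ⟨_, ⟨α, hα, rfl⟩, hlt⟩
    exact ⟨α, hlt, hα⟩
  · rintro ⟨α, hlt, hα⟩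
    exact ⟨_, ⟨α, hα, rfl⟩, hlt⟩

lemma latticeGauge_smul_le (c : K) (v : V) :
    latticeGauge K N (c • v) ≤ ‖c‖ * latticeGauge K N v := by
  refine le_of_forall_gt fun ε hε => ?_
  rcases eq_or_ne c 0 with rfl | hc
  · rw [zero_smul, ← smul_zero (0 : K)]
    rw [norm_zero, zero_mul] at hε
    exact (latticeGauge_smul_le_norm hN.zero_mem 0).trans_lt (by rwa [norm_zero])
  have hcpos : 0 < ‖c‖ := norm_pos_iff.2 hc
  obtain ⟨α, hα, n, hn, rfl⟩ := (latticeGauge_lt_iff hN).1 (lt_div_iff₀' hcpos |>.2 hε)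
  calc latticeGauge K N (c • α • n) = latticeGauge K N ((c * α) • n) := by rw [mul_smul]
    _ ≤ ‖c‖ * ‖α‖ := by rw [← norm_mul]; exact latticeGauge_smul_le_norm hn _
    _ < ε := (lt_div_iff₀' hcpos).1 hα

lemma latticeGauge_smul (c : K) (v : V) :
    latticeGauge K N (c • v) = ‖c‖ * latticeGauge K N v := by
  refine le_antisymm (latticeGauge_smul_le hN c v) ?_
  rcases eq_or_ne c 0 with rfl | hc
  · rw [norm_zero, zero_mul]
    exact latticeGauge_nonneg _
  have h := latticeGauge_smul_le hN c⁻¹ (c • v)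
  rwa [inv_smul_smul₀ hc, norm_inv, ← div_eq_inv_mul, le_div_iff₀' (norm_pos_iff.2 hc)] at h

lemma latticeGauge_add_le (v w : V) :
    latticeGauge K N (v + w) ≤ max (latticeGauge K N v) (latticeGauge K N w) := by
  refine le_of_forall_gt fun ε hε => ?_
  obtain ⟨α, hα, n, hn, rfl⟩ := (latticeGauge_lt_iff hN).1 ((le_max_left _ _).trans_lt hε)
  obtain ⟨β, hβ, n', hn', rfl⟩ := (latticeGauge_lt_iff hN).1 ((le_max_right _ _).trans_lt hε)
  rcases le_total ‖β‖ ‖α‖ with h | h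
  · obtain ⟨m, hm, e⟩ := hN.exists_smul_eq_smul_of_norm_le h hn'
    rw [e, ← smul_add]
    exact (latticeGauge_smul_le_norm (hN.add_mem hn hm) α).trans_lt hα
  · obtain ⟨m, hm, e⟩ := hN.exists_smul_eq_smul_of_norm_le h hn
    rw [e, ← smul_add]
    exact (latticeGauge_smul_le_norm (hN.add_mem hm hn') β).trans_lt hβ

lemma seminormTopology_latticeGauge :
    seminormTopology (latticeGauge K N) = gaugeTopology K N := by
  have hq0 : latticeGauge K N 0 = 0 := by
    simpa using latticeGauge_smul hN (0 : K) 0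
  refine ext_nhds fun x => Filter.ext fun U => ?_
  rw [seminormTopology_mem_nhds_iff hq0 (latticeGauge_add_le hN), gaugeTopology_mem_nhds_iff hN]
  constructor
  · rintro ⟨ε, hε, hU⟩
    obtain ⟨c, hc, hcε⟩ := NormedField.exists_norm_lt K hε
    refine ⟨c, norm_pos_iff.1 hc, fun _ ⟨n, hn, e⟩ => hU ?_⟩
    show latticeGauge K N (_ - x) < ε
    rw [e, add_sub_cancel_left]
    exact (latticeGauge_smul_le_norm hn c).trans_lt hcε
  · rintro ⟨c, hc, hU⟩
    refine ⟨‖c‖, norm_pos_iff.2 hc, fun w hw => hU ?_⟩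
    obtain ⟨β, hβ, n, hn, e⟩ := (latticeGauge_lt_iff hN).1 hw
    obtain ⟨m, hm, e'⟩ := hN.exists_smul_eq_smul_of_norm_le hβ.le hn
    exact ⟨m, hm, by rw [← e', ← e, add_sub_cancel]⟩

end LatticeGauge

section InvariantCore

variable {G V : Type*}

def invariantCore (G : Type*) [SMul G V] (M : Set V) : Set V := {v | ∀ g : G, g • v ∈ M}

variable [Monoid G] {M : Set V}

lemma invariantCore_subset [MulAction G V] : invariantCore G M ⊆ M := fun v hv => by
  simpa using hv 1

lemma smul_mem_invariantCore [MulAction G V] {v : V} (hv : v ∈ invariantCore G M) (g : G) :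
    g • v ∈ invariantCore G M := fun g' => by
  rw [smul_smul]
  exact hv (g' * g)

variable {K : Type*} [NontriviallyNormedField K] [AddCommGroup V] [Module K V]
  [DistribMulAction G V] [SMulCommClass G K V]

lemma IsLatticeIn.invariantCore (hM : IsLatticeIn K M) {c : K} (hc : c ≠ 0)
    (hcM : ∀ m ∈ M, c • m ∈ invariantCore G M) : IsLatticeIn K (invariantCore G M) := by
  refine ⟨fun g => ?_, fun x hx y hy g => ?_, fun a ha x hx g => ?_, fun v => ?_⟩
  · rw [smul_zero]
    exact hM.zero_mem
  · rw [smul_add]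
    exact hM.add_mem (hx g) (hy g)
  · rw [smul_comm]
    exact hM.smul_mem ha (hx g)
  · obtain ⟨a, ha, hav⟩ := hM.exists_smul_mem v
    exact ⟨c * a, mul_ne_zero hc ha, by rw [mul_smul]; exact hcM _ hav⟩

end InvariantCore

section Equivalences

variable {K : Type*} [NontriviallyNormedField K] {G V : Type*} [Group G] [AddCommGroup V]
  [Module K V] [DistribMulAction G V] {M : Set V}

lemma HasInvariantCommensurableLattice.hasInvariantGaugeSeminorm [SMulCommClass G K V]
    (hM : IsLatticeIn K M)
    (h : HasInvariantCommensurableLattice K (G := G) M) :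
    HasInvariantGaugeSeminorm K (G := G) M := by
  obtain ⟨N, hN, hinv, hNM⟩ := h
  refine ⟨latticeGauge K N, latticeGauge_nonneg, latticeGauge_smul hN, latticeGauge_add_le hN,
    latticeGauge_smul_eq_of_invariant hinv, ?_⟩
  rw [seminormTopology_latticeGauge hN, hNM.gaugeTopology_eq hN hM]

lemma HasInvariantGaugeSeminorm.actsEquicontinuouslyOnGauge
    (h : HasInvariantGaugeSeminorm K (G := G) M) :
    ActsEquicontinuouslyOnGauge K (G := G) M := by
  obtain ⟨q, -, hsmul, hmax, hinv, htop⟩ := h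
  have hq0 : q 0 = 0 := by simpa using hsmul 0 0
  intro U hU
  rw [← htop, seminormTopology_mem_nhds_iff hq0 hmax] at hU
  obtain ⟨ε, hε, hU⟩ := hU
  refine ⟨{w | q (w - 0) < ε}, ?_, fun g v hv => hU ?_⟩
  · rw [← htop, seminormTopology_mem_nhds_iff hq0 hmax]
    exact ⟨ε, hε, subset_rfl⟩
  · simpa only [mem_ofPred_eq, sub_zero, hinv] using hv

lemma ActsEquicontinuouslyOnGauge.hasInvariantCommensurableLattice [SMulCommClass G K V]
    (hM : IsLatticeIn K M)
    (h : ActsEquicontinuouslyOnGauge K (G := G) M) :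
    HasInvariantCommensurableLattice K (G := G) M := by
  obtain ⟨U, hU, hUM⟩ := h M (mem_nhds_zero_gaugeTopology hM)
  obtain ⟨c, hc, hc1, hcU⟩ := exists_latticeCoset_subset_of_mem_nhds hM hU
  have hcM : ∀ m ∈ M, c • m ∈ invariantCore G M := fun m hm g =>
    hUM g _ (hcU ⟨m, hm, (zero_add _).symm⟩)
  exact ⟨invariantCore G M, hM.invariantCore hc hcM, fun g v hv => smul_mem_invariantCore hv g,
    c, hc, hcM, fun n hn => hM.smul_mem hc1 (invariantCore_subset hn)⟩

end Equivalences

section Continuity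

lemma eventually_forall_smul_mem_of_continuous_smul {G V : Type*} [TopologicalSpace G]
    [CompactSpace G] [TopologicalSpace V] [Zero V] [SMulZeroClass G V]
    (hcont : Continuous fun p : G × V => p.1 • p.2) {U : Set V} (hU : U ∈ 𝓝 (0 : V)) :
    ∀ᶠ v in 𝓝 (0 : V), ∀ g : G, g • v ∈ U := by
  have hswap : Continuous fun p : V × G => p.2 • p.1 := hcont.comp continuous_swap
  have h := isCompact_univ.eventually_forall_of_forall_eventually (x₀ := (0 : V))
    (P := fun v (g : G) => g • v ∈ U) fun g _ =>
      hswap.continuousAt.preimage_mem_nhds (by rwa [smul_zero])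
  exact h.mono fun v hv g => hv g (mem_univ g)

variable {K : Type*} [NontriviallyNormedField K] {G V : Type*} [Group G] [AddCommGroup V]
  [Module K V] [DistribMulAction G V] {M : Set V}

lemma le_gaugeTopology [t : TopologicalSpace V] [IsTopologicalAddGroup V]
    [ContinuousConstSMul K V] (hM : IsOpen M) : t ≤ gaugeTopology K M := by
  refine le_generateFrom ?_
  rintro _ ⟨v, c, hc, rfl⟩
  convert ((Homeomorph.smulOfNeZero c hc).trans (Homeomorph.addLeft v)).isOpenMap M hM using 1
  ext w
  simp [eq_comm]

lemma ActsEquicontinuouslyOnGauge.continuous_smul (hM : IsLatticeIn K M) [TopologicalSpace G]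
    (h : ActsEquicontinuouslyOnGauge K (G := G) M)
    (horbit : ∀ v : V, Continuous[_, gaugeTopology K M] fun g : G => g • v) :
    @Continuous (G × V) V (@instTopologicalSpaceProd G V _ (gaugeTopology K M))
      (gaugeTopology K M) fun p : G × V => p.1 • p.2 := by
  let _ := gaugeTopology K M
  refine continuous_iff_continuousAt.2 fun ⟨g₀, v₀⟩ U hU => ?_
  obtain ⟨c, hc, hcU⟩ := (gaugeTopology_mem_nhds_iff hM).1 hU
  obtain ⟨U', hU', hU'c⟩ := h _ ((gaugeTopology_mem_nhds_iff hM).2 ⟨c, hc, subset_rfl⟩)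
  obtain ⟨c', hc', hc'U'⟩ := (gaugeTopology_mem_nhds_iff hM).1 hU'
  have hW : (· • v₀) ⁻¹' latticeCoset M (g₀ • v₀) c ∈ 𝓝 g₀ :=
    (horbit v₀).continuousAt.preimage_mem_nhds
      ((gaugeTopology_mem_nhds_iff hM).2 ⟨c, hc, subset_rfl⟩)
  have hB : latticeCoset M v₀ c' ∈ 𝓝 v₀ := (gaugeTopology_mem_nhds_iff hM).2 ⟨c', hc', subset_rfl⟩
  -- `g • v - g₀ • v₀ = (g • v₀ - g₀ • v₀) + g • (v - v₀)`
  rw [mem_map, nhds_prod_eq]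
  filter_upwards [prod_mem_prod hW hB]
  rintro ⟨g, _⟩ ⟨⟨m₁, hm₁, e₁⟩, ⟨m, hm, rfl⟩⟩
  obtain ⟨m₂, hm₂, e₂⟩ := hU'c g (c' • m) (hc'U' ⟨m, hm, (zero_add _).symm⟩)
  refine hcU ⟨m₁ + m₂, hM.add_mem hm₁ hm₂, ?_⟩
  simp only [smul_add, ← add_assoc] at e₁ e₂ ⊢
  rw [e₂, zero_add, e₁]

lemma actsEquicontinuouslyOnGauge_of_continuous_smul [TopologicalSpace G] [CompactSpace G]
    (h : @Continuous (G × V) V (@instTopologicalSpaceProd G V _ (gaugeTopology K M))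
      (gaugeTopology K M) fun p : G × V => p.1 • p.2) :
    ActsEquicontinuouslyOnGauge K (G := G) M :=
  let _ := gaugeTopology K M
  fun _ hU => ⟨_, eventually_forall_smul_mem_of_continuous_smul h hU, fun g _ hv => hv g⟩

end Continuity

theorem stmt_19_general {K : Type*} [NontriviallyNormedField K]
    {G V : Type*} [Group G] [AddCommGroup V] [Module K V]
    [DistribMulAction G V] [SMulCommClass G K V]
    (M : Set V) (hM : IsLatticeIn K M) :
    (HasInvariantCommensurableLattice K (G := G) M ↔
        HasInvariantGaugeSeminorm K (G := G) M) ∧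
    (HasInvariantGaugeSeminorm K (G := G) M ↔
        ActsEquicontinuouslyOnGauge K (G := G) M) ∧
    (∀ (tV : TopologicalSpace V) (tG : TopologicalSpace G),
      @IsTopologicalGroup G tG _ → @CompactSpace G tG →
      @IsTopologicalAddGroup V tV _ → @ContinuousSMul K V _ _ tV →
      @Continuous (G × V) V (@instTopologicalSpaceProd G V tG tV) tV
        (fun p : G × V => p.1 • p.2) →
      @IsOpen V tV M →
      (HasInvariantCommensurableLattice K (G := G) M ↔
        @Continuous (G × V) V (@instTopologicalSpaceProd G V tG (gaugeTopology K M))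
          (gaugeTopology K M) (fun p : G × V => p.1 • p.2))) := by
  have lattice_to_equicontinuous (h : HasInvariantCommensurableLattice K (G := G) M) :
      ActsEquicontinuouslyOnGauge K (G := G) M :=
    (h.hasInvariantGaugeSeminorm hM).actsEquicontinuouslyOnGauge
  refine ⟨⟨(·.hasInvariantGaugeSeminorm hM),
      fun h => h.actsEquicontinuouslyOnGauge.hasInvariantCommensurableLattice hM⟩,
    ⟨(·.actsEquicontinuouslyOnGauge),
      fun h => (h.hasInvariantCommensurableLattice hM).hasInvariantGaugeSeminorm hM⟩, ?_⟩
  intro tV tG _ _ _ _ hact hMopen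
  have horbit (v : V) : Continuous[tG, gaugeTopology K M] fun g : G => g • v :=
    continuous_le_rng (le_gaugeTopology hMopen) (hact.comp (continuous_id.prodMk continuous_const))
  exact ⟨fun h => (lattice_to_equicontinuous h).continuous_smul hM horbit,
    fun h => (actsEquicontinuouslyOnGauge_of_continuous_smul h).hasInvariantCommensurableLattice hM⟩

/-- Proposition 6.5.2 and Lemma 6.5.3: for a group `G` acting `K`-linearly on a `K`-vector
space `V` over a discretely valued complete nonarchimedean field, and a lattice `M` in `V`,
the following are equivalent: (i) there is a `G`-invariant lattice commensurable with `M`;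
(ii) there is a `G`-invariant seminorm defining the gauge topology of `M`; (iii) `G` acts
equicontinuously for the gauge topology of `M`.  Moreover, if `V` is a topological
`K`-vector space, `G` is a compact topological group acting continuously on `V`, and `M` is
open, then these conditions are equivalent to the joint continuity of the `G`-action on `V`
equipped with the gauge topology of `M`. -/
theorem stmt_19 {K : Type*} [NontriviallyNormedField K] [CompleteSpace K]
    [IsUltrametricDist K]
    (hdv : ∃ π : K, 0 < ‖π‖ ∧ ‖π‖ < 1 ∧ ∀ x : K, x ≠ 0 → ∃ n : ℤ, ‖x‖ = ‖π‖ ^ n)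
    {G V : Type*} [Group G] [AddCommGroup V] [Module K V]
    [DistribMulAction G V] [SMulCommClass G K V]
    (M : Set V) (hM : IsLatticeIn K M) :
    (HasInvariantCommensurableLattice K (G := G) M ↔
        HasInvariantGaugeSeminorm K (G := G) M) ∧
    (HasInvariantGaugeSeminorm K (G := G) M ↔
        ActsEquicontinuouslyOnGauge K (G := G) M) ∧
    (∀ (tV : TopologicalSpace V) (tG : TopologicalSpace G),
      @IsTopologicalGroup G tG _ → @CompactSpace G tG →
      @IsTopologicalAddGroup V tV _ → @ContinuousSMul K V _ _ tV →
      @Continuous (G × V) V (@instTopologicalSpaceProd G V tG tV) tV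
        (fun p : G × V => p.1 • p.2) →
      @IsOpen V tV M →
      (HasInvariantCommensurableLattice K (G := G) M ↔
        @Continuous (G × V) V (@instTopologicalSpaceProd G V tG (gaugeTopology K M))
          (gaugeTopology K M) (fun p : G × V => p.1 • p.2))) :=
  stmt_19_general M hM
end
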